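/- Let δ : Σ → {a,b}* map symbols injectively to b a^i b (i ≥ 1), extended homomorphically, and suppose a palindromic factorization F of δ(S) is not composed entirely of preserved palindromes (images δ(P)). Then F begins with a (possibly empty) sequence of preserved palindromes followed by the single-symbol factor b, and also ends with the single-symbol factor b preceded by a (possibly empty) sequence of preserved palindromes, and these two occurrences of the factor b are distinct positions; hence F is not diverse. -/

import Mathlib

/-- `F` is a palindromic factorization of `S`. -/
def PalFact {α : Type*} (S : List α) (F : List (List α)) : Prop :=
  F.flatten = S ∧ ∀ f ∈ F, f ≠ [] ∧ f.reverse = f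

/-- The block `b a^j b` over the binary alphabet `Bool` (`a = false`, `b = true`). -/
def blockBA (j : ℕ) : List Bool := true :: (List.replicate j false ++ [true])

/-- The block encoding of a string, sending symbol `s` to `b a^(i s) b`,
extended homomorphically. -/
def encBA {σ : Type*} (i : σ → ℕ) (w : List σ) : List Bool :=
  (w.map fun s => blockBA (i s)).flatten

/-- A preserved palindrome of `δ(S)`: the image `δ(P)` of a palindromic
substring `P` of `S`. -/
def Preserved {σ : Type*} (i : σ → ℕ) (S : List σ) (f : List Bool) : Prop :=
  ∃ P : List σ, P <:+: S ∧ P.reverse = P ∧ f = encBA i P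


/-!
The letter `b` occurs in `δ(S)` exactly at the block boundaries, and a nonempty palindromic prefix of
`δ(S)` must end at such a `b`. Ending at the closing `b` of a block makes it `δ(P)` for a prefix
`P` of `S`, and `P` is then a palindrome because `δ` is injective; ending at an opening `b` makes it
`δ(P) b`, which starts with `ba` but ends with `bb` unless `P` is empty. Scanning the
factorization from the left, the first factor that is not preserved is therefore `b`; by symmetry
so is the last one. If these were the same factor, `δ(S)` would contain an odd number of `b`s,
since every `δ(P)` contains an even number.
-/

theorem List.eq_and_eq_or_exists_of_append_cons_eq_append_cons {α : Type*} {a : α}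
    {l₁ l₂ m₁ m₂ : List α} (h : l₁ ++ a :: l₂ = m₁ ++ a :: m₂) (ha : a ∉ l₁) :
    (m₁ = l₁ ∧ m₂ = l₂) ∨ ∃ k, m₁ = l₁ ++ a :: k ∧ l₂ = k ++ a :: m₂ := by
  rcases List.append_eq_append_iff.mp h with ⟨_ | ⟨x, k⟩, hm, hl⟩ | ⟨_ | ⟨x, k⟩, hl, hm⟩
  · simp_all
  · simp only [List.cons_append, List.cons.injEq] at hl
    obtain ⟨rfl, rfl⟩ := hl
    exact Or.inr ⟨k, hm, rfl⟩
  · simp_all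
  · simp only [List.cons_append, List.cons.injEq] at hm
    simp [hl, hm.1] at ha

theorem PalFact.reverse {α : Type*} {S : List α} {F : List (List α)} (hF : PalFact S F) :
    PalFact S.reverse F.reverse := by
  obtain ⟨hjoin, hpal⟩ := hF
  have hmap : F.map List.reverse = F :=
    (List.map_congr_left fun f hf => (hpal f hf).2).trans (List.map_id F)
  exact ⟨by rw [← hjoin, List.reverse_flatten, hmap],
    fun f hf => hpal f (List.mem_reverse.mp hf)⟩

section Encoding

variable {σ : Type*} (i : σ → ℕ)

@[simp]
theorem encBA_nil : encBA i [] = [] := rfl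

@[simp]
theorem encBA_cons (s : σ) (W : List σ) : encBA i (s :: W) = blockBA (i s) ++ encBA i W := by
  simp [encBA]

theorem encBA_append (P Q : List σ) : encBA i (P ++ Q) = encBA i P ++ encBA i Q := by
  simp [encBA]

theorem blockBA_reverse (j : ℕ) : (blockBA j).reverse = blockBA j := by
  simp [blockBA]

theorem encBA_reverse (W : List σ) : (encBA i W).reverse = encBA i W.reverse := by
  induction W with
  | nil => rfl
  | cons s W ih => simp [encBA_append, ih, blockBA_reverse]

theorem count_true_encBA (P : List σ) : (encBA i P).count true = 2 * P.length := by
  induction P with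
  | nil => rfl
  | cons p P ih =>
    simp [blockBA, List.count_replicate, ih]
    omega

variable {i}

theorem blockBA_append_inj {m n : ℕ} {x y : List Bool}
    (h : blockBA m ++ x = blockBA n ++ y) : m = n ∧ x = y := by
  simp only [blockBA, List.cons_append, List.cons.injEq, true_and, List.append_assoc] at h
  rcases List.eq_and_eq_or_exists_of_append_cons_eq_append_cons h (by simp)
    with ⟨hmn, hxy⟩ | ⟨k, hn, -⟩
  · exact ⟨by simpa using congrArg List.length hmn.symm, hxy.symm⟩
  · have : true ∈ List.replicate n false := by simp [hn]
    simp at this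

theorem encBA_injective (hinj : Function.Injective i) : Function.Injective (encBA i) := by
  intro P
  induction P with
  | nil => rintro (_ | _) h <;> simp_all [blockBA]
  | cons p P ih =>
    rintro (_ | ⟨q, Q⟩) h
    · simp [blockBA] at h
    · obtain ⟨hpq, hPQ⟩ := blockBA_append_inj h
      rw [hinj hpq, ih hPQ]

theorem encBA_eq_true_cons_false_cons (hpos : ∀ s, 1 ≤ i s) {W : List σ} (hW : W ≠ []) :
    ∃ t, encBA i W = true :: false :: t := by
  obtain ⟨s, W, rfl⟩ := List.exists_cons_of_ne_nil hW
  obtain ⟨k, hk⟩ := Nat.exists_eq_add_of_le' (hpos s)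
  exact ⟨List.replicate k false ++ true :: encBA i W, by simp [blockBA, hk, List.replicate_succ]⟩

/-- An occurrence of `b` in `δ(W)` is either the opening `b` of a block (first case) or the
closing one (second case). -/
theorem encBA_eq_append_true_cons {W : List σ} {u v : List Bool}
    (h : encBA i W = u ++ true :: v) :
    (∃ P Q, W = P ++ Q ∧ u = encBA i P) ∨
      ∃ P Q, W = P ++ Q ∧ u ++ [true] = encBA i P ∧ v = encBA i Q := by
  induction W generalizing u with
  | nil => simp at h
  | cons s W ih =>
    rcases u with _ | ⟨c, u⟩
    · exact Or.inl ⟨[], s :: W, rfl, rfl⟩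
    simp only [encBA_cons, blockBA, List.cons_append, List.cons.injEq, List.append_assoc,
      List.nil_append] at h
    obtain ⟨rfl, h⟩ := h
    rcases List.eq_and_eq_or_exists_of_append_cons_eq_append_cons h (by simp)
      with ⟨rfl, rfl⟩ | ⟨k, rfl, hk⟩
    · exact Or.inr ⟨[s], W, rfl, by simp [blockBA], rfl⟩
    rcases ih hk with ⟨P, Q, rfl, rfl⟩ | ⟨P, Q, rfl, hP, rfl⟩
    · exact Or.inl ⟨s :: P, Q, rfl, by simp [blockBA]⟩
    · exact Or.inr ⟨s :: P, Q, rfl, by simp [blockBA, ← hP], rfl⟩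

theorem eq_true_or_eq_encBA_of_palindrome_prefix (hpos : ∀ s, 1 ≤ i s) {W : List σ}
    {f r : List Bool} (hne : f ≠ []) (hpal : f.reverse = f) (h : encBA i W = f ++ r) :
    f = [true] ∨ ∃ P Q, W = P ++ Q ∧ f = encBA i P ∧ r = encBA i Q := by
  have hW : W ≠ [] := by
    rintro rfl
    exact hne (List.append_eq_nil_iff.mp h.symm).1
  obtain ⟨t, ht⟩ := encBA_eq_true_cons_false_cons hpos hW
  obtain ⟨c, f, rfl⟩ := List.exists_cons_of_ne_nil hne
  obtain rfl : c = true := by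
    rw [ht, List.cons_append, List.cons.injEq] at h
    exact h.1.symm
  rcases List.eq_nil_or_concat' f with rfl | ⟨u, d, rfl⟩
  · exact Or.inl rfl
  obtain rfl : d = true := by simpa using congrArg List.head? hpal
  rw [List.cons_append, List.append_assoc, List.singleton_append, ← List.cons_append] at h
  rcases encBA_eq_append_true_cons h with ⟨P, Q, rfl, hP⟩ | ⟨P, Q, rfl, hP, rfl⟩
  · -- `f = δ(P) b` with `P ≠ []` begins with `ba`, its reverse `b δ(P.reverse)` with `bb`.
    exfalso
    have hP0 : P ≠ [] := by rintro rfl; simp at hP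
    obtain ⟨t₁, ht₁⟩ := encBA_eq_true_cons_false_cons hpos hP0
    obtain ⟨t₂, ht₂⟩ := encBA_eq_true_cons_false_cons hpos (List.reverse_ne_nil_iff.mpr hP0)
    have hrev : (true :: (u ++ [true])).reverse = true :: encBA i P.reverse := by
      rw [← encBA_reverse, ← hP]; simp
    rw [hpal, ht₂] at hrev
    rw [ht₁, List.cons.injEq] at hP
    simp [hP.2] at hrev
  · exact Or.inr ⟨P, Q, rfl, by rw [← hP]; rfl, rfl⟩

end Encoding

section Preserved

variable {σ : Type*} {i : σ → ℕ}

theorem Preserved.mono {W V : List σ} {f : List Bool} (hWV : W <:+: V) (hf : Preserved i W f) :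
    Preserved i V f :=
  let ⟨P, hP, hpal, hf⟩ := hf
  ⟨P, hP.trans hWV, hpal, hf⟩

theorem Preserved.of_reverse {S : List σ} {f : List Bool} (hf : Preserved i S.reverse f) :
    Preserved i S f := by
  obtain ⟨P, hP, hpal, rfl⟩ := hf
  refine ⟨P, ?_, hpal, rfl⟩
  rwa [← List.reverse_infix, hpal]

theorem not_preserved_true (hpos : ∀ s, 1 ≤ i s) (S : List σ) : ¬ Preserved i S [true] := by
  rintro ⟨P, -, -, hP⟩
  rcases eq_or_ne P [] with rfl | hP0
  · simp at hP
  · obtain ⟨t, ht⟩ := encBA_eq_true_cons_false_cons hpos hP0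
    simp [ht] at hP

theorem even_count_true_flatten {S : List σ} {L : List (List Bool)}
    (hL : ∀ f ∈ L, Preserved i S f) : Even (L.flatten.count true) := by
  induction L with
  | nil => simp
  | cons f L ih =>
    obtain ⟨P, -, -, rfl⟩ := hL f List.mem_cons_self
    rw [List.flatten_cons, List.count_append, count_true_encBA]
    exact (even_two_mul _).add (ih fun g hg => hL g (List.mem_cons_of_mem _ hg))

theorem PalFact.exists_eq_preserved_append_true_cons (hinj : Function.Injective i)
    (hpos : ∀ s, 1 ≤ i s) {W : List σ} {F : List (List Bool)} (hF : PalFact (encBA i W) F)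
    (hnp : ¬ ∀ f ∈ F, Preserved i W f) :
    ∃ F₁ F₂, F = F₁ ++ [true] :: F₂ ∧ ∀ f ∈ F₁, Preserved i W f := by
  induction F generalizing W with
  | nil => simp at hnp
  | cons f F ih =>
    obtain ⟨hjoin, hpal⟩ := hF
    obtain ⟨hne, hfpal⟩ := hpal f List.mem_cons_self
    rcases eq_true_or_eq_encBA_of_palindrome_prefix hpos hne hfpal hjoin.symm
      with rfl | ⟨P, Q, rfl, rfl, hjoinQ⟩
    · exact ⟨[], F, rfl, by simp⟩
    have hP : Preserved i (P ++ Q) (encBA i P) :=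
      ⟨P, (List.prefix_append P Q).isInfix,
        encBA_injective hinj (by rw [← encBA_reverse, hfpal]), rfl⟩
    have hQ : Q <:+: P ++ Q := (List.suffix_append P Q).isInfix
    obtain ⟨F₁, F₂, rfl, hF₁⟩ := ih ⟨hjoinQ, fun g hg => hpal g (List.mem_cons_of_mem _ hg)⟩
      fun hall => hnp <| List.forall_mem_cons.mpr ⟨hP, fun g hg => (hall g hg).mono hQ⟩
    exact ⟨encBA i P :: F₁, F₂, rfl,
      List.forall_mem_cons.mpr ⟨hP, fun g hg => (hF₁ g hg).mono hQ⟩⟩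

theorem PalFact.not_preserved_append_true_cons {S : List σ} {F₁ F₂ : List (List Bool)}
    (hF : PalFact (encBA i S) (F₁ ++ [true] :: F₂)) (hF₁ : ∀ f ∈ F₁, Preserved i S f) :
    ¬ ∀ f ∈ F₂, Preserved i S f := by
  intro hF₂
  have hcount := congrArg (List.count true) hF.1
  rw [List.flatten_append, List.flatten_cons, List.count_append, List.count_append,
    count_true_encBA] at hcount
  obtain ⟨m₁, hm₁⟩ := even_count_true_flatten hF₁
  obtain ⟨m₂, hm₂⟩ := even_count_true_flatten hF₂
  simp only [hm₁, hm₂, List.count_singleton_self] at hcount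
  omega

end Preserved

/-- If a palindromic factorization of `δ(S)` is not composed entirely of preserved
palindromes, then it begins with preserved palindromes followed by a single factor `b`,
ends with a single factor `b` followed by preserved palindromes, these two `b` factors
occupying distinct positions; hence it is not diverse. -/
theorem stmt10 {σ : Type*} (i : σ → ℕ) (hinj : Function.Injective i)
    (hpos : ∀ s, 1 ≤ i s) (S : List σ) (F : List (List Bool))
    (hF : PalFact (encBA i S) F)
    (hnp : ¬ ∀ f ∈ F, Preserved i S f) :
    (∃ F₁ F₂ F₃ : List (List Bool),
        F = F₁ ++ [[true]] ++ F₂ ++ [[true]] ++ F₃ ∧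
        (∀ f ∈ F₁, Preserved i S f) ∧ (∀ f ∈ F₃, Preserved i S f)) ∧
    ¬ F.Nodup := by
  obtain ⟨F₁, F', hleft, hF₁⟩ := hF.exists_eq_preserved_append_true_cons hinj hpos hnp
  have hFrev : PalFact (encBA i S.reverse) F.reverse := by
    simpa only [encBA_reverse] using hF.reverse
  obtain ⟨G₃, G', hright, hG₃⟩ := hFrev.exists_eq_preserved_append_true_cons hinj hpos
    fun hall => hnp fun f hf => (hall f (List.mem_reverse.mpr hf)).of_reverse
  have hF₃ : ∀ f ∈ G₃.reverse, Preserved i S f :=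
    fun f hf => (hG₃ f (List.mem_reverse.mp hf)).of_reverse
  have hright' : F = G'.reverse ++ [true] :: G₃.reverse := by
    simpa using congrArg List.reverse hright
  rcases List.eq_and_eq_or_exists_of_append_cons_eq_append_cons (hleft.symm.trans hright')
    (fun h => not_preserved_true hpos S (hF₁ _ h)) with ⟨-, hF'⟩ | ⟨F₂, -, hF'⟩
  · exact absurd hF₃ ((hF'.symm ▸ hleft ▸ hF).not_preserved_append_true_cons hF₁)
  · subst hleft hF'
    exact ⟨⟨F₁, F₂, G₃.reverse, by simp, hF₁, hF₃⟩, by simp [List.nodup_append]⟩
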